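/- For all integers d, k ≥ 1 and 1 ≤ r ≤ min(d,k), the VC dimension of the hyperplane arrangement classifier class HAC(d,r,k) satisfies VC(HAC(d,r,k)) ≤ 8·( k(d+1) + k(d+1)(1 + ⌈log₂ k⌉) + binom(k, ≤ r) ). -/

import Mathlib

/-!
A classifier in `HAC(d,r,k)` sees a point `x` only through its sign pattern
`{j | 0 ≤ (Wᵀx + b)_j}`. On a set `S` of `n` points the pattern map is determined by `k`
halfspace traces on `S`, of which there are at most `∑_{i ≤ d+1} C(n,i)`; and since `Wᵀx` ranges
over a space of dimension at most `r`, the pattern map takes at most `binom(k, ≤ r)` values, so the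
Boolean function `h` contributes a factor `2^binom(k, ≤ r)`. Both counts are Sauer–Shelah combined
with Dudley's lemma: the sets `{f ≥ 0}`, `f ∈ f₀ + V`, shatter no set larger than `dim V`.
Shattering `S` thus forces `2^n ≤ (∑_{i ≤ d+1} C(n,i))^k · 2^binom(k, ≤ r)`, and the estimate
`∑_{i ≤ m} C(n,i) ≤ (en/m)^m` turns this into a linear bound on `n`.
-/

/-- The sign function: `sgn t = 1` if `t ≥ 0`, and `-1` otherwise. -/
noncomputable def sgn (t : ℝ) : ℝ := if 0 ≤ t then 1 else -1

/-- `binomLe k r = binom(k, ≤ r)`, i.e. `2^k` if `k < r` and `C(k,0) + ⋯ + C(k,r)` if `k ≥ r`. -/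
def binomLe (k r : ℕ) : ℕ :=
  if k < r then 2 ^ k else ∑ i ∈ Finset.range (r + 1), k.choose i

/-- The hyperplane arrangement classifier class `HAC(d,r,k)`: all classifiers
`x ↦ h(sgn(Wᵀx + b))` where `W ∈ ℝ^{d×k}` has rank at most `r`, `b ∈ ℝ^k`, and
`h : {±1}^k → {±1}` is a Boolean function. -/
noncomputable def HAC (d r k : ℕ) : Set ((Fin d → ℝ) → ℝ) :=
  {f | ∃ (W : Matrix (Fin d) (Fin k) ℝ) (b : Fin k → ℝ) (h : (Fin k → ℝ) → ℝ),
    W.rank ≤ r ∧ (∀ s, h s = 1 ∨ h s = -1) ∧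
    ∀ x, f x = h fun j => sgn ((∑ i, W i j * x i) + b j)}

/-- A finite set `S` is shattered by the concept class `C ⊆ {±1}^X` if every `±1`-labelling of
`S` is realized by some `f ∈ C`. -/
def Shatters {X : Type*} (C : Set (X → ℝ)) (S : Finset X) : Prop :=
  ∀ y : X → ℝ, (∀ x ∈ S, y x = 1 ∨ y x = -1) → ∃ f ∈ C, ∀ x ∈ S, f x = y x

open Finset Matrix

theorem not_forall_exists_sign_pattern {ι : Type*} {s : Finset ι} {a : ι → ℝ}
    (ha : ∃ i ∈ s, a i ≠ 0) (c : ℝ) :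
    ¬ ∀ t ⊆ s, ∃ z : ι → ℝ, ∑ i ∈ s, a i * z i = c ∧ ∀ i ∈ s, (i ∈ t ↔ 0 ≤ z i) := by
  classical
  intro H
  obtain ⟨zp, hzp, hp⟩ := H {i ∈ s | 0 ≤ a i} (filter_subset _ _)
  obtain ⟨zm, hzm, hm⟩ := H {i ∈ s | a i < 0} (filter_subset _ _)
  -- `zp - zm` has the strict sign of `a` wherever `a ≠ 0`, yet is orthogonal to `a`.
  have hterm : ∀ i ∈ s, a i ≠ 0 → 0 < a i * (zp i - zm i) := by
    intro i hi hai
    have hp := hp i hi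
    have hm := hm i hi
    simp only [mem_filter, hi, true_and] at hp hm
    rcases hai.lt_or_gt with hneg | hpos
    · have : zp i < 0 := not_le.1 fun h => hneg.not_ge (hp.2 h)
      nlinarith [hm.1 hneg]
    · have : zm i < 0 := not_le.1 fun h => hpos.not_gt (hm.2 h)
      nlinarith [hp.1 hpos.le]
  obtain ⟨i₀, hi₀, hai₀⟩ := ha
  have hsum : 0 < ∑ i ∈ s, a i * (zp i - zm i) := by
    refine sum_pos' (fun i hi => ?_) ⟨i₀, hi₀, hterm i₀ hi₀ hai₀⟩
    by_cases hai : a i = 0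
    · simp [hai]
    · exact (hterm i hi hai).le
  simp [mul_sub, sum_sub_distrib, hzp, hzm] at hsum

theorem exists_sum_mul_eq_zero_of_finrank_lt {α : Type*} (V : Submodule ℝ (α → ℝ))
    [FiniteDimensional ℝ V] {s : Finset α} (hs : Module.finrank ℝ V < s.card) :
    ∃ a : α → ℝ, (∃ x ∈ s, a x ≠ 0) ∧ ∀ v ∈ V, ∑ x ∈ s, a x * v x = 0 := by
  let ev : α → Module.Dual ℝ V := fun x => (LinearMap.proj x).comp V.subtype
  have hdep : ¬ LinearIndepOn ℝ ev (s : Set α) := fun h => by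
    have := h.fintype_card_le_finrank
    simp only [coe_sort_coe, Fintype.card_coe, Subspace.dual_finrank_eq] at this
    omega
  rw [linearIndepOn_finset_iff] at hdep
  push Not at hdep
  obtain ⟨a, hsum, x, hx, hax⟩ := hdep
  exact ⟨a, ⟨x, hx, hax⟩, fun v hv => by simpa [ev] using LinearMap.congr_fun hsum ⟨v, hv⟩⟩

theorem Finset.Shatters.card_le_finrank {α : Type*} [DecidableEq α] {𝒜 : Finset (Finset α)}
    {f₀ : α → ℝ} {V : Submodule ℝ (α → ℝ)} [FiniteDimensional ℝ V]
    (h𝒜 : ∀ u ∈ 𝒜, ∃ v ∈ V, ∀ x, x ∈ u ↔ 0 ≤ v x + f₀ x) {s : Finset α}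
    (hs : 𝒜.Shatters s) : s.card ≤ Module.finrank ℝ V := by
  by_contra! hlt
  obtain ⟨a, ha, hV⟩ := exists_sum_mul_eq_zero_of_finrank_lt V hlt
  refine not_forall_exists_sign_pattern ha (∑ x ∈ s, a x * f₀ x) fun t ht => ?_
  obtain ⟨u, hu, rfl⟩ := hs ht
  obtain ⟨v, hv, huv⟩ := h𝒜 u hu
  refine ⟨v + f₀, ?_, fun x hx => by simp [hx, huv]⟩
  simp [mul_add, sum_add_distrib, hV v hv]

theorem card_le_sum_choose_finrank {α : Type*} [Fintype α] [DecidableEq α]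
    {𝒜 : Finset (Finset α)} {f₀ : α → ℝ} {V : Submodule ℝ (α → ℝ)}
    (h𝒜 : ∀ u ∈ 𝒜, ∃ v ∈ V, ∀ x, x ∈ u ↔ 0 ≤ v x + f₀ x) :
    𝒜.card ≤ ∑ i ∈ Iic (Module.finrank ℝ V), (Fintype.card α).choose i := by
  refine (card_le_card_shatterer 𝒜).trans (card_shatterer_le_sum_vcDim.trans ?_)
  refine sum_le_sum_of_subset (Iic_subset_Iic.2 (Finset.sup_le fun s hs => ?_))
  exact (mem_shatterer.1 hs).card_le_finrank h𝒜

theorem binomLe_eq_sum (k r : ℕ) : binomLe k r = ∑ i ∈ Iic r, k.choose i := by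
  unfold binomLe
  split_ifs with hkr
  · rw [← Nat.sum_range_choose]
    refine sum_subset (fun i hi => mem_Iic.2 (by grind)) fun i _ hi => ?_
    exact Nat.choose_eq_zero_of_lt (by simpa using hi)
  · rw [Nat.range_succ_eq_Iic]

theorem binomLe_mono_right (k : ℕ) : Monotone (binomLe k) := fun _ _ h => by
  simp only [binomLe_eq_sum]
  exact sum_le_sum_of_subset (Iic_subset_Iic.2 h)

section SignPattern

variable {d k : ℕ}

noncomputable def signPattern (W : Matrix (Fin d) (Fin k) ℝ) (b : Fin k → ℝ) (x : Fin d → ℝ) :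
    Finset (Fin k) :=
  {j | 0 ≤ ∑ i, W i j * x i + b j}

theorem exists_signPattern_of_mem_HAC {r : ℕ} {f : (Fin d → ℝ) → ℝ} (hf : f ∈ HAC d r k) :
    ∃ (W : Matrix (Fin d) (Fin k) ℝ) (b : Fin k → ℝ), W.rank ≤ r ∧
      ∃ T : Set (Finset (Fin k)), ∀ x, f x = 1 ↔ signPattern W b x ∈ T := by
  obtain ⟨W, b, h, hW, -, hf⟩ := hf
  refine ⟨W, b, hW, {P | h (fun j => if j ∈ P then 1 else -1) = 1}, fun x => ?_⟩
  have hsgn : (fun j => sgn (∑ i, W i j * x i + b j)) =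
      fun j => if j ∈ signPattern W b x then 1 else -1 := by
    funext j
    simp [sgn, signPattern]
  simp [hf, hsgn]

theorem card_le_binomLe_rank {W : Matrix (Fin d) (Fin k) ℝ} {b : Fin k → ℝ}
    {𝒜 : Finset (Finset (Fin k))} (h𝒜 : ∀ u ∈ 𝒜, ∃ x, signPattern W b x = u) :
    𝒜.card ≤ binomLe k W.rank := by
  have := card_le_sum_choose_finrank (f₀ := b) (V := LinearMap.range Wᵀ.mulVecLin)
    fun u hu => by
      obtain ⟨x, rfl⟩ := h𝒜 u hu
      exact ⟨Wᵀ *ᵥ x, LinearMap.mem_range_self _ _, fun j => by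
        simp [signPattern, mulVec, dotProduct]⟩
  rw [binomLe_eq_sum, ← rank_transpose]
  rwa [Fintype.card_fin] at this

end SignPattern

section Counting

variable {X ι β : Type*} [Fintype X]

theorem card_le_card_mul_two_pow_of_forall_preimage [DecidableEq β] {𝒯 : Finset (Finset X)}
    {𝒮 : Finset (X → β)} {L : ℕ} (h𝒮 : ∀ σ ∈ 𝒮, (univ.image σ).card ≤ L)
    (h𝒯 : ∀ t ∈ 𝒯, ∃ σ ∈ 𝒮, ∃ T : Set β, ∀ x, x ∈ t ↔ σ x ∈ T) :
    𝒯.card ≤ 𝒮.card * 2 ^ L := by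
  classical
  let preimages (σ : X → β) : Finset (Finset X) :=
    (univ.image σ).powerset.image fun T => ({x | σ x ∈ T} : Finset X)
  calc 𝒯.card ≤ (𝒮.biUnion preimages).card := by
        refine card_le_card fun t ht => ?_
        obtain ⟨σ, hσ, T, hT⟩ := h𝒯 t ht
        refine mem_biUnion.2 ⟨σ, hσ, mem_image.2 ⟨{y ∈ univ.image σ | y ∈ T}, by simp, ?_⟩⟩
        ext x
        simp [hT]
    _ ≤ ∑ σ ∈ 𝒮, 2 ^ L := card_biUnion_le.trans <| sum_le_sum fun σ hσ =>
        card_image_le.trans <| (card_powerset _).trans_le <|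
          Nat.pow_le_pow_right two_pos (h𝒮 σ hσ)
    _ = 𝒮.card * 2 ^ L := by rw [sum_const, smul_eq_mul]

theorem card_le_card_pow_of_forall_fiber_mem [Fintype ι] [DecidableEq ι]
    {𝒮 : Finset (X → Finset ι)} {ℋ : Finset (Finset X)}
    (h : ∀ σ ∈ 𝒮, ∀ j, ({x | j ∈ σ x} : Finset X) ∈ ℋ) :
    𝒮.card ≤ ℋ.card ^ Fintype.card ι := by
  let fibers (σ : X → Finset ι) (j : ι) : Finset X := {x | j ∈ σ x}
  calc 𝒮.card ≤ (Fintype.piFinset fun _ : ι => ℋ).card := by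
        refine card_le_card_of_injOn fibers (fun σ hσ => by simpa using h σ hσ)
          fun σ₁ _ σ₂ _ h₁₂ => ?_
        funext x
        ext j
        simpa [fibers] using congrArg (x ∈ ·) (congrFun h₁₂ j)
    _ = ℋ.card ^ Fintype.card ι := by simp

end Counting

section Halfspaces

variable {d : ℕ}

open Classical in
noncomputable def halfspaceTraces (S : Finset (Fin d → ℝ)) : Finset (Finset S) :=
  {u | ∃ (w : Fin d → ℝ) (c : ℝ), ∀ x : S, x ∈ u ↔ 0 ≤ ∑ i, w i * (x : Fin d → ℝ) i + c}

theorem mem_halfspaceTraces {S : Finset (Fin d → ℝ)} {u : Finset S} :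
    u ∈ halfspaceTraces S ↔
      ∃ (w : Fin d → ℝ) (c : ℝ), ∀ x : S, x ∈ u ↔ 0 ≤ ∑ i, w i * (x : Fin d → ℝ) i + c := by
  unfold halfspaceTraces
  simp only [mem_filter, mem_univ, true_and]

theorem card_halfspaceTraces_le (S : Finset (Fin d → ℝ)) :
    (halfspaceTraces S).card ≤ ∑ i ∈ Iic (d + 1), S.card.choose i := by
  classical
  let A : Matrix S (Option (Fin d)) ℝ := Matrix.of fun x i => i.elim 1 x.1
  have hA : A.rank ≤ d + 1 := A.rank_le_card_width.trans (by simp)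
  have := card_le_sum_choose_finrank (𝒜 := halfspaceTraces S) (f₀ := 0)
    (V := LinearMap.range A.mulVecLin) fun u hu => by
      obtain ⟨w, c, hu⟩ := mem_halfspaceTraces.1 hu
      refine ⟨A.mulVecLin fun i => i.elim c w, LinearMap.mem_range_self _ _, fun x => ?_⟩
      simp [hu, A, mulVec, dotProduct, Fintype.sum_option, mul_comm, add_comm]
  rw [Fintype.card_coe] at this
  exact this.trans (sum_le_sum_of_subset (Iic_subset_Iic.2 hA))

end Halfspaces

section Shattering

variable {d r k : ℕ} {S : Finset (Fin d → ℝ)}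

theorem exists_signPattern_of_shatters (hS : Shatters (HAC d r k) S) (t : Finset S) :
    ∃ (W : Matrix (Fin d) (Fin k) ℝ) (b : Fin k → ℝ), W.rank ≤ r ∧
      ∃ T : Set (Finset (Fin k)), ∀ x : S, x ∈ t ↔ signPattern W b x ∈ T := by
  classical
  obtain ⟨f, hf, hft⟩ := hS (fun x => if x ∈ t.map (.subtype _) then 1 else -1)
    fun x _ => by split_ifs <;> simp
  obtain ⟨W, b, hW, T, hT⟩ := exists_signPattern_of_mem_HAC hf
  refine ⟨W, b, hW, T, fun x => ?_⟩
  rw [← hT, hft x x.2]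
  by_cases hx : x ∈ t <;> norm_num [hx]

theorem two_pow_card_le_of_shatters (hS : Shatters (HAC d r k) S) :
    2 ^ S.card ≤ (∑ i ∈ Iic (d + 1), S.card.choose i) ^ k * 2 ^ binomLe k r := by
  classical
  let 𝒮 : Finset (S → Finset (Fin k)) :=
    {σ | ∃ (W : Matrix (Fin d) (Fin k) ℝ) (b : Fin k → ℝ), W.rank ≤ r ∧
      σ = fun x : S => signPattern W b x}
  have h𝒮 : ∀ σ ∈ 𝒮, (univ.image σ).card ≤ binomLe k r := by
    intro σ hσ
    obtain ⟨W, b, hW, rfl⟩ := (mem_filter.1 hσ).2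
    refine (card_le_binomLe_rank (b := b) fun u hu => ?_).trans (binomLe_mono_right k hW)
    obtain ⟨x, -, rfl⟩ := mem_image.1 hu
    exact ⟨x, rfl⟩
  have hfibers : ∀ σ ∈ 𝒮, ∀ j, ({x | j ∈ σ x} : Finset S) ∈ halfspaceTraces S := by
    intro σ hσ j
    obtain ⟨W, b, -, rfl⟩ := (mem_filter.1 hσ).2
    exact mem_halfspaceTraces.2 ⟨fun i => W i j, b j, fun x => by simp [signPattern]⟩
  calc 2 ^ S.card = (univ : Finset (Finset S)).card := by simp
    _ ≤ 𝒮.card * 2 ^ binomLe k r :=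
        card_le_card_mul_two_pow_of_forall_preimage h𝒮 fun t _ => by
          obtain ⟨W, b, hW, T, hT⟩ := exists_signPattern_of_shatters hS t
          exact ⟨_, mem_filter.2 ⟨mem_univ _, W, b, hW, rfl⟩, T, hT⟩
    _ ≤ (halfspaceTraces S).card ^ k * 2 ^ binomLe k r := by
        gcongr
        simpa using card_le_card_pow_of_forall_fiber_mem hfibers
    _ ≤ (∑ i ∈ Iic (d + 1), S.card.choose i) ^ k * 2 ^ binomLe k r := by
        gcongr
        exact card_halfspaceTraces_le S

end Shattering

theorem sum_choose_mul_pow_le_exp {n m : ℕ} (hmn : m ≤ n) {x : ℝ} (hx₀ : 0 ≤ x) (hx₁ : x ≤ 1) :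
    (∑ i ∈ Iic m, (n.choose i : ℝ)) * x ^ m ≤ Real.exp (n * x) := by
  calc (∑ i ∈ Iic m, (n.choose i : ℝ)) * x ^ m
      = ∑ i ∈ Iic m, (n.choose i : ℝ) * x ^ m := sum_mul _ _ _
    _ ≤ ∑ i ∈ Iic m, (n.choose i : ℝ) * x ^ i := sum_le_sum fun i hi =>
        mul_le_mul_of_nonneg_left (pow_le_pow_of_le_one hx₀ hx₁ (mem_Iic.1 hi)) (by positivity)
    _ ≤ ∑ i ∈ range (n + 1), (n.choose i : ℝ) * x ^ i := by
        rw [← Nat.range_succ_eq_Iic]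
        exact sum_le_sum_of_subset_of_nonneg (range_subset_range.2 (by omega))
          fun _ _ _ => by positivity
    _ = (x + 1) ^ n := by
        rw [add_pow]
        exact sum_congr rfl fun i _ => by ring
    _ ≤ Real.exp x ^ n := by gcongr; exact Real.add_one_le_exp x
    _ = Real.exp (n * x) := (Real.exp_nat_mul x n).symm

theorem log_sum_choose_le {n m : ℕ} (hm : 0 < m) (hmn : m ≤ n) :
    Real.log (∑ i ∈ Iic m, n.choose i : ℕ) ≤ m * (1 + Real.log (n / m)) := by
  have hm' : (0 : ℝ) < m := Nat.cast_pos.2 hm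
  have hn : (0 : ℝ) < n := Nat.cast_pos.2 (hm.trans_le hmn)
  have hM : (0 : ℝ) < ∑ i ∈ Iic m, (n.choose i : ℝ) :=
    sum_pos' (fun _ _ => by positivity) ⟨0, by simp, by simp⟩
  have h := sum_choose_mul_pow_le_exp hmn (x := m / n) (by positivity)
    ((div_le_one hn).2 (by exact_mod_cast hmn))
  rw [mul_div_cancel₀ _ hn.ne'] at h
  have h := Real.log_le_log (by positivity) h
  rw [Real.log_mul hM.ne' (by positivity), Real.log_pow, Real.log_exp,
    Real.log_div hm'.ne' hn.ne'] at h
  rw [Real.log_div hn.ne' hm'.ne']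
  push_cast
  linarith

theorem log_le_div_add_log_sub_one {y c : ℝ} (hy : 0 < y) (hc : 0 < c) :
    Real.log y ≤ y / c + Real.log c - 1 := by
  have := Real.log_le_sub_one_of_pos (div_pos hy hc)
  rw [Real.log_div hy.ne' hc.ne'] at this
  linarith

theorem mul_log_sum_choose_le {n m k C : ℕ} (hm : 0 < m) (hmn : m ≤ n) (hk : 0 < k)
    (hkC : k ≤ 2 ^ C) :
    k * Real.log (∑ i ∈ Iic m, n.choose i : ℕ) ≤ n / 4 + k * m * (C + 2) * Real.log 2 := by
  have hk' : (0 : ℝ) < k := Nat.cast_pos.2 hk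
  have hm' : (0 : ℝ) < m := Nat.cast_pos.2 hm
  have hn' : (0 : ℝ) < n := Nat.cast_pos.2 (hm.trans_le hmn)
  have h4k : Real.log (4 * k) ≤ (C + 2) * Real.log 2 := by
    have : (4 * k : ℝ) ≤ 2 ^ (C + 2) := by
      have : (k : ℝ) ≤ 2 ^ C := by exact_mod_cast hkC
      rw [pow_add]
      linarith
    calc Real.log (4 * k) ≤ Real.log (2 ^ (C + 2)) := Real.log_le_log (by positivity) this
      _ = (C + 2) * Real.log 2 := by rw [Real.log_pow]; push_cast; ring
  -- `c = 4k` makes the term linear in `n` equal to `n / 4`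
  have hdiv := log_le_div_add_log_sub_one (div_pos hn' hm') (c := 4 * k) (by positivity)
  calc k * Real.log (∑ i ∈ Iic m, n.choose i : ℕ) ≤ k * (m * (1 + Real.log (n / m))) := by
        gcongr
        exact log_sum_choose_le hm hmn
    _ ≤ k * (m * (n / m / (4 * k) + Real.log (4 * k))) := by
        have : 1 + Real.log (n / m) ≤ n / m / (4 * k) + Real.log (4 * k) := by linarith
        gcongr
    _ = n / 4 + k * m * Real.log (4 * k) := by field_simp
    _ ≤ n / 4 + k * m * (C + 2) * Real.log 2 := by
        rw [mul_assoc (k * m : ℝ)]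
        gcongr

theorem le_of_two_pow_le_sum_choose_pow_mul_two_pow {n m k L C : ℕ} (hm : 0 < m)
    (hkC : k ≤ 2 ^ C) (h : 2 ^ n ≤ (∑ i ∈ Iic m, n.choose i) ^ k * 2 ^ L) :
    n ≤ 8 * (k * m + k * m * (1 + C) + L) := by
  rcases Nat.eq_zero_or_pos k with rfl | hk
  · rw [pow_zero, one_mul, Nat.pow_le_pow_iff_right one_lt_two] at h
    omega
  rcases le_or_gt n m with hnm | hmn
  · have := Nat.le_mul_of_pos_left m hk
    omega
  suffices (n : ℝ) ≤ 2 * (k * m * (C + 2) + L) by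
    have : n ≤ 2 * (k * m * (C + 2) + L) := by exact_mod_cast this
    nlinarith
  have hM : 0 < ∑ i ∈ Iic m, n.choose i := sum_pos' (fun _ _ => Nat.zero_le _) ⟨0, by simp, by simp⟩
  have hcount : n * Real.log 2 ≤
      k * Real.log (∑ i ∈ Iic m, n.choose i : ℕ) + L * Real.log 2 := by
    have h : (2 : ℝ) ^ n ≤ ((∑ i ∈ Iic m, n.choose i : ℕ) : ℝ) ^ k * 2 ^ L := by exact_mod_cast h
    have h := Real.log_le_log (by positivity) h
    rwa [Real.log_mul (by positivity) (by positivity), Real.log_pow, Real.log_pow,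
      Real.log_pow] at h
  have := mul_log_sum_choose_le hm hmn.le hk hkC
  nlinarith [Real.log_two_gt_d9]

theorem vc_dim_HAC_le_general (d r k : ℕ)
    (S : Finset (Fin d → ℝ)) (hS : Shatters (HAC d r k) S) :
    S.card ≤ 8 * (k * (d + 1) + k * (d + 1) * (1 + Nat.clog 2 k) + binomLe k r) :=
  le_of_two_pow_le_sum_choose_pow_mul_two_pow d.succ_pos (Nat.le_pow_clog one_lt_two k)
    (two_pow_card_le_of_shatters hS)

/-- `VC(HAC(d,r,k)) ≤ 8·(k(d+1) + k(d+1)(1 + ⌈log₂ k⌉) + binom(k, ≤ r))`: every finite set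
shattered by `HAC(d,r,k)` has cardinality at most this bound. -/
theorem vc_dim_HAC_le (d r k : ℕ) (hd : 1 ≤ d) (hk : 1 ≤ k)
    (hr : 1 ≤ r) (hrd : r ≤ d) (hrk : r ≤ k)
    (S : Finset (Fin d → ℝ)) (hS : Shatters (HAC d r k) S) :
    S.card ≤ 8 * (k * (d + 1) + k * (d + 1) * (1 + Nat.clog 2 k) + binomLe k r) :=
  vc_dim_HAC_le_general d r k S hS
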